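/- For every cluster s ∈ Σ: if |s| is odd then s is coloured red or blue, and if |s| is even then s is coloured purple or black. -/
import Mathlib


/-- Colours of roots and clusters. -/
inductive Colour : Type
  | red | blue | purple | black
deriving DecidableEq

/-- A cluster picture on a finite set `R`: a collection of nonempty subsets of `R`
containing `R` and all singletons, any two of which are nested or disjoint. -/
def IsClusterPicture {α : Type*} [DecidableEq α] (R : Finset α) (CP : Set (Finset α)) : Prop :=
  (∀ s ∈ CP, s.Nonempty ∧ s ⊆ R) ∧ R ∈ CP ∧ (∀ r ∈ R, ({r} : Finset α) ∈ CP) ∧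
    ∀ s ∈ CP, ∀ t ∈ CP, s ⊆ t ∨ t ⊆ s ∨ s ∩ t = ∅

/-- `t` is a child of `s`: a maximal cluster properly contained in `s`. -/
def IsChildOf {α : Type*} [DecidableEq α] (CP : Set (Finset α)) (t s : Finset α) : Prop :=
  t ∈ CP ∧ t ⊂ s ∧ ∀ u ∈ CP, u ⊂ s → t ⊆ u → u = t

/-- The number of children of `s` coloured red or purple. -/
noncomputable def aCount {α : Type*} [DecidableEq α] (CP : Set (Finset α)) (col : Finset α → Colour)
    (s : Finset α) : ℕ :=
  Set.ncard {t : Finset α | IsChildOf CP t s ∧ (col t = Colour.red ∨ col t = Colour.purple)}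

/-- The number of children of `s` coloured blue or purple. -/
noncomputable def bCount {α : Type*} [DecidableEq α] (CP : Set (Finset α)) (col : Finset α → Colour)
    (s : Finset α) : ℕ :=
  Set.ncard {t : Finset α | IsChildOf CP t s ∧ (col t = Colour.blue ∨ col t = Colour.purple)}

/-- `col` is the recursive colouring of the clusters of the cluster picture `CP`
induced by the colouring `c` of the roots. -/
def IsColouring {α : Type*} [DecidableEq α] (R : Finset α) (CP : Set (Finset α))
    (c : α → Colour) (col : Finset α → Colour) : Prop :=
  (∀ r ∈ R, col {r} = c r) ∧
    ∀ s ∈ CP, 2 ≤ s.card →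
      ((Odd (aCount CP col s) ∧ Even (bCount CP col s)) → col s = Colour.red) ∧
      ((Odd (bCount CP col s) ∧ Even (aCount CP col s)) → col s = Colour.blue) ∧
      ((Odd (aCount CP col s) ∧ Odd (bCount CP col s)) → col s = Colour.purple) ∧
      ((Even (aCount CP col s) ∧ Even (bCount CP col s)) → col s = Colour.black)

/-- A cluster is chromatic if it is red, blue or purple. -/
def Chromatic {β : Type*} (col : β → Colour) (t : β) : Prop :=
  col t = Colour.red ∨ col t = Colour.blue ∨ col t = Colour.purple

-- auxiliary lemma
lemma cluster_aux {α : Type*} [DecidableEq α] (R : Finset α)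
    (c : α → Colour) (hc : ∀ r ∈ R, c r = Colour.red ∨ c r = Colour.blue)
    (CP : Set (Finset α)) (hCP : IsClusterPicture R CP)
    (col : Finset α → Colour) (hcol : IsColouring R CP c col) :
    ∀ n : ℕ, ∀ s ∈ CP, s.card = n →
      (Odd s.card → col s = Colour.red ∨ col s = Colour.blue) ∧
      (Even s.card → col s = Colour.purple ∨ col s = Colour.black) := by
  classical
  obtain ⟨hmem, hRCP, hsing, hnest⟩ := hCP
  obtain ⟨hcol1, hcol2⟩ := hcol
  intro n
  induction n using Nat.strong_induction_on with
  | _ n IH =>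
  intro s hs hn
  rcases Nat.lt_or_ge n 2 with hlt | hge
  · -- card 0 or 1
    have hsne := (hmem s hs).1
    have h1 : s.card = 1 := by
      have := Finset.card_pos.mpr hsne
      omega
    obtain ⟨r, hr⟩ := Finset.card_eq_one.mp h1
    subst hr
    have hrR : r ∈ R := (hmem _ hs).2 (Finset.mem_singleton_self r)
    have : col {r} = c r := hcol1 r hrR
    rw [h1, this]
    constructor
    · intro _; exact hc r hrR
    · intro h; exact absurd h (by decide)
  · -- card ≥ 2
    subst hn
    set C : Finset (Finset α) := s.powerset.filter (fun t => IsChildOf CP t s) with hC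
    have hmemC : ∀ t, t ∈ C ↔ IsChildOf CP t s := by
      intro t
      simp only [hC, Finset.mem_filter, Finset.mem_powerset, and_iff_right_iff_imp]
      exact fun h => h.2.1.1
    -- every point of s is in some child
    have hcover : ∀ r ∈ s, ∃ t ∈ C, r ∈ t := by
      intro r hrs
      set S : Finset (Finset α) :=
        s.powerset.filter (fun u => u ∈ CP ∧ u ⊂ s ∧ r ∈ u) with hS
      have hSne : S.Nonempty := by
        refine ⟨{r}, ?_⟩
        simp only [hS, Finset.mem_filter, Finset.mem_powerset]
        have hrR : r ∈ R := (hmem s hs).2 hrs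
        have hsub : ({r} : Finset α) ⊆ s := Finset.singleton_subset_iff.mpr hrs
        refine ⟨hsub, hsing r hrR, ⟨hsub, ?_⟩, Finset.mem_singleton_self r⟩
        intro hss
        have := Finset.card_le_card hss
        simp at this
        omega
      obtain ⟨t, htS, hmax⟩ := S.exists_max_image Finset.card hSne
      simp only [hS, Finset.mem_filter, Finset.mem_powerset] at htS
      obtain ⟨-, htCP, htlt, hrt⟩ := htS
      refine ⟨t, (hmemC t).mpr ⟨htCP, htlt, ?_⟩, hrt⟩
      intro u huCP hus htu
      have huS : u ∈ S := by
        simp only [hS, Finset.mem_filter, Finset.mem_powerset]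
        exact ⟨hus.1, huCP, hus, htu hrt⟩
      exact (Finset.eq_of_subset_of_card_le htu (hmax u huS)).symm
    -- children are pairwise disjoint
    have hdisj : (C : Set (Finset α)).PairwiseDisjoint id := by
      intro t1 h1 t2 h2 hne
      rw [Finset.mem_coe, hmemC] at h1 h2
      rcases hnest t1 h1.1 t2 h2.1 with h | h | h
      · exact absurd (h1.2.2 t2 h2.1 h2.2.1 h) hne.symm
      · exact absurd (h2.2.2 t1 h1.1 h1.2.1 h) hne
      · simp only [Function.onFun, id]
        rw [Finset.disjoint_iff_inter_eq_empty]
        exact h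
    -- s is the union of its children
    have hunion : s = C.biUnion id := by
      ext r
      simp only [Finset.mem_biUnion, id]
      constructor
      · exact hcover r
      · rintro ⟨t, htC, hrt⟩
        exact ((hmemC t).mp htC).2.1.1 hrt
    have hcard : s.card = ∑ t ∈ C, t.card := by
      conv_lhs => rw [hunion]
      exact Finset.card_biUnion (fun t ht u hu hne => hdisj ht hu hne)
    -- aCount and bCount as finset cards
    have haC : aCount CP col s = (C.filter (fun t => col t = Colour.red ∨ col t = Colour.purple)).card := by
      rw [aCount, ← Set.ncard_coe_finset]
      congr 1
      ext t
      simp [Finset.mem_filter, hmemC t]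
    have hbC : bCount CP col s = (C.filter (fun t => col t = Colour.blue ∨ col t = Colour.purple)).card := by
      rw [bCount, ← Set.ncard_coe_finset]
      congr 1
      ext t
      simp [Finset.mem_filter, hmemC t]
    -- IH for children: card mod 2 ↔ colour
    have hchild : ∀ t ∈ C, ((t.card : ZMod 2) = if col t = Colour.red ∨ col t = Colour.blue then 1 else 0) := by
      intro t htC
      have ht := (hmemC t).mp htC
      have hlt : t.card < s.card := Finset.card_lt_card ht.2.1
      have := IH t.card hlt t ht.1 rfl
      rcases Nat.even_or_odd t.card with he | ho
      · have hcolt := this.2 he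
        obtain ⟨k, hk⟩ := he
        have h0 : (t.card : ZMod 2) = 0 := by
          rw [hk]; push_cast; exact CharTwo.add_self_eq_zero _
        rw [h0]
        rcases hcolt with h | h <;> rw [h] <;> simp
      · have hcolt := this.1 ho
        obtain ⟨k, hk⟩ := ho
        have h1 : (t.card : ZMod 2) = 1 := by
          rw [hk]; push_cast; simp [CharTwo.two_eq_zero]
        rw [h1, if_pos hcolt]
    -- main computation in ZMod 2
    have hsum : (s.card : ZMod 2) = ((C.filter (fun t => col t = Colour.red ∨ col t = Colour.blue)).card : ZMod 2) := by
      rw [hcard, Nat.cast_sum]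
      rw [Finset.sum_congr rfl hchild]
      rw [Finset.sum_ite, Finset.sum_const, Finset.sum_const]
      simp
    -- disjointness of colour classes
    have hdj : ∀ (c1 c2 : Colour), c1 ≠ c2 →
        Disjoint (C.filter (fun t => col t = c1)) (C.filter (fun t => col t = c2)) := by
      intro c1 c2 hne
      simp only [Finset.disjoint_left, Finset.mem_filter]
      rintro t ⟨-, h⟩ ⟨-, h'⟩
      exact hne (h.symm.trans h')
    have hsplit_a : (C.filter (fun t => col t = Colour.red ∨ col t = Colour.purple)).card
        = (C.filter (fun t => col t = Colour.red)).card + (C.filter (fun t => col t = Colour.purple)).card := by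
      rw [Finset.filter_or, Finset.card_union_of_disjoint (hdj _ _ (by decide))]
    have hsplit_b : (C.filter (fun t => col t = Colour.blue ∨ col t = Colour.purple)).card
        = (C.filter (fun t => col t = Colour.blue)).card + (C.filter (fun t => col t = Colour.purple)).card := by
      rw [Finset.filter_or, Finset.card_union_of_disjoint (hdj _ _ (by decide))]
    have hsplit_rb : (C.filter (fun t => col t = Colour.red ∨ col t = Colour.blue)).card
        = (C.filter (fun t => col t = Colour.red)).card + (C.filter (fun t => col t = Colour.blue)).card := by
      rw [Finset.filter_or, Finset.card_union_of_disjoint (hdj _ _ (by decide))]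
    have hmod : s.card % 2 = (C.filter (fun t => col t = Colour.red ∨ col t = Colour.blue)).card % 2 := by
      have := (ZMod.natCast_eq_natCast_iff _ _ _).mp hsum
      exact this
    have hab : (aCount CP col s + bCount CP col s) % 2 = s.card % 2 := by
      rw [haC, hbC, hsplit_a, hsplit_b, hmod, hsplit_rb]
      omega
    obtain ⟨hred, hblue, hpurple, hblack⟩ := hcol2 s hs hge
    rcases Nat.even_or_odd (aCount CP col s) with ha | ha
    · have ha' := Nat.even_iff.mp ha
      rcases Nat.even_or_odd s.card with he | ho
      · -- b even
        have hb : Even (bCount CP col s) := by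
          rw [Nat.even_iff]
          have := Nat.even_iff.mp he
          omega
        refine ⟨fun ho' => absurd he (Nat.not_even_iff_odd.mpr ho'), fun _ => ?_⟩
        exact Or.inr (hblack ⟨ha, hb⟩)
      · -- b odd
        have hb : Odd (bCount CP col s) := by
          rw [Nat.odd_iff]
          have := Nat.odd_iff.mp ho
          omega
        refine ⟨fun _ => Or.inr (hblue ⟨hb, ha⟩), fun he => absurd ho (Nat.not_odd_iff_even.mpr he)⟩
    · have ha' := Nat.odd_iff.mp ha
      rcases Nat.even_or_odd s.card with he | ho
      · have hb : Odd (bCount CP col s) := by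
          rw [Nat.odd_iff]
          have := Nat.even_iff.mp he
          omega
        refine ⟨fun ho' => absurd he (Nat.not_even_iff_odd.mpr ho'), fun _ => ?_⟩
        exact Or.inl (hpurple ⟨ha, hb⟩)
      · have hb : Even (bCount CP col s) := by
          rw [Nat.even_iff]
          have := Nat.odd_iff.mp ho
          omega
        refine ⟨fun _ => Or.inl (hred ⟨ha, hb⟩), fun he => absurd ho (Nat.not_odd_iff_even.mpr he)⟩

/-- Odd clusters are red or blue; even clusters are purple or black. -/
theorem cluster_colour_parity {α : Type*} [DecidableEq α] (R : Finset α) (hR : R.Nonempty)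
    (c : α → Colour) (hc : ∀ r ∈ R, c r = Colour.red ∨ c r = Colour.blue)
    (CP : Set (Finset α)) (hCP : IsClusterPicture R CP)
    (col : Finset α → Colour) (hcol : IsColouring R CP c col)
    (s : Finset α) (hs : s ∈ CP) :
    (Odd s.card → col s = Colour.red ∨ col s = Colour.blue) ∧
    (Even s.card → col s = Colour.purple ∨ col s = Colour.black) := by
  exact cluster_aux R c hc CP hCP col hcol s.card s hs rfl
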